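/- Let n ≥ 4 and let λ₁, …, λₙ be real numbers with λ₁ + ⋯ + λₙ = 0. Writing pₖ = σₖ(λ)/C(n,k), one has the identity C(n,4)·(p₄ + 3p₂²) = −(1/4)·(Σᵢ λᵢ⁴ − ((n² − 3n + 3)/(n(n − 1)))·(Σᵢ λᵢ²)²). -/

import Mathlib

open Finset

/-- The `k`-th elementary symmetric polynomial of `lam 0, …, lam (n-1)`. -/
noncomputable def esymm {n : ℕ} (k : ℕ) (lam : Fin n → ℝ) : ℝ :=
  ∑ s ∈ (Finset.univ : Finset (Fin n)).powersetCard k, ∏ i ∈ s, lam i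

/-- The normalized elementary symmetric function `p k = σ k / C(n,k)`. -/
noncomputable def p {n : ℕ} (k : ℕ) (lam : Fin n → ℝ) : ℝ :=
  esymm k lam / (n.choose k)

/-! Newton's identities with vanishing first power sum `∑ λᵢ = 0` give `σ₂ = -S₂/2` and
`σ₄ = S₂²/8 - S₄/4`, where `Sₖ = ∑ λᵢ ^ k`; with `C(n,2)` and `C(n,4)` written as polynomials
in `n`, the identity is then a rational-function identity in `n`, `S₂` and `S₄`. -/

theorem Nat.cast_choose_four {K : Type*} [Field K] [CharZero K] (n : ℕ) :
    (n.choose 4 : K) = n * (n - 1) * (n - 2) * (n - 3) / 24 := by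
  rw [Nat.cast_choose_eq_descPochhammer_div]
  simp [descPochhammer_succ_right, Nat.factorial]

section ElementarySymmetric

variable {n : ℕ} (lam : Fin n → ℝ)

theorem esymm_eq_aeval (k : ℕ) :
    esymm k lam = MvPolynomial.aeval lam (MvPolynomial.esymm (Fin n) ℝ k) := by
  simp [esymm, MvPolynomial.esymm, map_sum]

theorem mul_esymm_eq_sum (k : ℕ) :
    k * esymm k lam = (-1) ^ (k + 1) *
      ∑ a ∈ antidiagonal k with a.1 < k, (-1) ^ a.1 * esymm a.1 lam * ∑ i, lam i ^ a.2 := by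
  simpa [map_sum, esymm_eq_aeval, MvPolynomial.psum, mul_comm] using
    congrArg (MvPolynomial.aeval lam) (MvPolynomial.mul_esymm_eq_sum (Fin n) ℝ k)

theorem esymm_zero : esymm 0 lam = 1 := by
  simp [esymm]

theorem esymm_one : esymm 1 lam = ∑ i, lam i := by
  simp [esymm, powersetCard_one]

variable {lam}

theorem esymm_two_of_sum_eq_zero (hsum : ∑ i, lam i = 0) :
    esymm 2 lam = -(∑ i, lam i ^ 2) / 2 := by
  have h := mul_esymm_eq_sum lam 2
  rw [show ({a ∈ antidiagonal 2 | a.1 < 2} : Finset (ℕ × ℕ)) = {(0, 2), (1, 1)} by decide]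
    at h
  simp [esymm_zero, esymm_one, hsum] at h
  linarith

theorem esymm_four_of_sum_eq_zero (hsum : ∑ i, lam i = 0) :
    esymm 4 lam = (∑ i, lam i ^ 2) ^ 2 / 8 - (∑ i, lam i ^ 4) / 4 := by
  have h := mul_esymm_eq_sum lam 4
  rw [show ({a ∈ antidiagonal 4 | a.1 < 4} : Finset (ℕ × ℕ)) =
    {(0, 4), (1, 3), (2, 2), (3, 1)} by decide] at h
  simp [esymm_zero, esymm_one, hsum, esymm_two_of_sum_eq_zero hsum] at h
  linarith

end ElementarySymmetric

theorem choose_four_p4_identity (n : ℕ) (hn : 4 ≤ n) (lam : Fin n → ℝ)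
    (hsum : ∑ i, lam i = 0) :
    (n.choose 4 : ℝ) * (p 4 lam + 3 * p 2 lam ^ 2) =
      -(1 / 4) * ((∑ i, lam i ^ 4) -
        ((n : ℝ) ^ 2 - 3 * n + 3) / (n * (n - 1)) * (∑ i, lam i ^ 2) ^ 2) := by
  have hn' : (4 : ℝ) ≤ n := by exact_mod_cast hn
  have : (n : ℝ) ≠ 0 := by linarith
  have : (n : ℝ) - 1 ≠ 0 := by linarith
  have : (n : ℝ) - 2 ≠ 0 := by linarith
  have : (n : ℝ) - 3 ≠ 0 := by linarith
  rw [p, p, esymm_two_of_sum_eq_zero hsum, esymm_four_of_sum_eq_zero hsum,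
    Nat.cast_choose_two, Nat.cast_choose_four]
  field_simp
  ring
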